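/- arXiv:2307.01708 — 3 statements merged into one kernel-verified Lean document; each statement's English description precedes it below -/
import Mathlib

section
/- Let ρ be a risk measure and ψ = (ψ₁,…,ψ_m) a sketch, and suppose ρ lies in the affine span of ψ: there exist α₀, α₁, …, α_m ∈ ℝ such that ρ(ν) = Σ_{i=1}^m α_i ψ_i(ν) + α₀ for all ν ∈ P_ψ(ℝ) ∩ P_ρ(ℝ). Assume all return-distribution values η^π_m(x) (for all models m, policies π, states x) lie in P_ψ(ℝ) ∩ P_ρ(ℝ). Then any policy optimal with respect to ρ in a model m̃ ∈ M^∞_ψ(Π̄) is optimal with respect to ρ in the true model m*. -/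
/-- An MDP setting: finite nonempty state and action spaces (with σ-algebras). -/
structure MDPSetting where
  X : Type
  A : Type
  [mX : MeasurableSpace X]
  [mA : MeasurableSpace A]
  [fX : Fintype X]
  [fA : Fintype A]
  [nX : Nonempty X]
  [nA : Nonempty A]

attribute [instance] MDPSetting.mX MDPSetting.mA MDPSetting.fX MDPSetting.fA
  MDPSetting.nX MDPSetting.nA

open MeasureTheory Filter

section RLPreamble

variable (X A : Type) [MeasurableSpace X] [MeasurableSpace A]

/-- A model of an MDP: a transition kernel and a reward kernel, where each reward
distribution is a probability measure on ℝ with finite first moment. -/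
structure RLModel where
  P : X → A → Measure X
  R : X → A → Measure ℝ
  P_prob : ∀ x a, IsProbabilityMeasure (P x a)
  R_prob : ∀ x a, IsProbabilityMeasure (R x a)
  R_int : ∀ x a, Integrable id (R x a)

/-- A (stationary Markov) policy: a probability measure over actions at each state. -/
abbrev RLPolicy : Type := {π : X → Measure A // ∀ x, IsProbabilityMeasure (π x)}

/-- The distributional Bellman operator `T^π_m` of model `m` under policy `π`:
`T^π_m η (x) = E_{a∼π(x), r∼R_m(x,a), x'∼P_m(x,a)} [(b_{r,γ})_# η(x')]`. -/
noncomputable def bellman (γ : ℝ) (m : RLModel X A) (π : RLPolicy X A)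
    (η : X → Measure ℝ) : X → Measure ℝ := fun x =>
  (π.1 x).bind fun a =>
    (m.R x a).bind fun r =>
      (m.P x a).bind fun x' =>
        (η x').map fun z => r + γ * z

/-- `ret` assigns to each model and policy its return-distribution function: the unique
fixed point of the distributional Bellman operator among functions valued in probability
measures with finite first moment. -/
def IsReturn (γ : ℝ) (ret : RLModel X A → RLPolicy X A → X → Measure ℝ) : Prop :=
  ∀ m π, (∀ x, IsProbabilityMeasure (ret m π x) ∧ Integrable id (ret m π x)) ∧
    bellman X A γ m π (ret m π) = ret m π ∧
    ∀ η : X → Measure ℝ, (∀ x, IsProbabilityMeasure (η x) ∧ Integrable id (η x)) →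
      bellman X A γ m π η = η → η = ret m π

/-- A policy `πs` is optimal with respect to the risk measure `ρ` in model `m`:
it attains the maximal value of `ρ` over all policies, at every state. -/
def IsOptimal (ret : RLModel X A → RLPolicy X A → X → Measure ℝ)
    (ρ : Measure ℝ → ℝ) (m : RLModel X A) (πs : RLPolicy X A) : Prop :=
  ∀ x, ∀ π : RLPolicy X A, ρ (ret m π x) ≤ ρ (ret m πs x)

/-- `π₁` dominates `π₂` with respect to `ρ` in model `m`. -/
def Dominates (ret : RLModel X A → RLPolicy X A → X → Measure ℝ)
    (ρ : Measure ℝ → ℝ) (m : RLModel X A) (π₁ π₂ : RLPolicy X A) : Prop :=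
  ∀ x, ρ (ret m π₂ x) ≤ ρ (ret m π₁ x)

/-- The proper value equivalence class `M^∞(Π̄)` of models in `Ms` whose value
functions agree with those of the true model `mstar` for all policies. -/
def properValueEquiv (ret : RLModel X A → RLPolicy X A → X → Measure ℝ)
    (mstar : RLModel X A) (Ms : Set (RLModel X A)) : Set (RLModel X A) :=
  {mt ∈ Ms | ∀ (π : RLPolicy X A) (x : X),
    (∫ z, z ∂(ret mt π x)) = ∫ z, z ∂(ret mstar π x)}

/-- The proper distribution equivalence class `M^∞_dist(Π̄)`. -/
def properDistEquiv (ret : RLModel X A → RLPolicy X A → X → Measure ℝ)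
    (mstar : RLModel X A) (Ms : Set (RLModel X A)) : Set (RLModel X A) :=
  {mt ∈ Ms | ∀ π : RLPolicy X A, ret mt π = ret mstar π}

variable {n : ℕ}

/-- One application of the projected operator `s ↦ ψ(T^π_m (ι ∘ s))` on statistics. -/
noncomputable def sketchBellman (γ : ℝ) (m : RLModel X A) (π : RLPolicy X A)
    (ψ : Measure ℝ → Fin n → ℝ) (ι : (Fin n → ℝ) → Measure ℝ) :
    (X → Fin n → ℝ) → X → Fin n → ℝ :=
  fun s x => ψ (bellman X A γ m π (fun y => ι (s y)) x)

/-- The order-`k` `ψ`-equivalence class `M^k_ψ(Π, I)`. -/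
noncomputable def sketchEquiv (γ : ℝ) (mstar : RLModel X A) (Ms : Set (RLModel X A))
    (ψ : Measure ℝ → Fin n → ℝ) (ι : (Fin n → ℝ) → Measure ℝ) (k : ℕ)
    (Pol : Set (RLPolicy X A)) (Is : Set (X → Fin n → ℝ)) : Set (RLModel X A) :=
  {mt ∈ Ms | ∀ π ∈ Pol, ∀ s ∈ Is,
    (sketchBellman X A γ mstar π ψ ι)^[k] s = (sketchBellman X A γ mt π ψ ι)^[k] s}

/-- The proper `ψ`-equivalence class `M^∞_ψ(Π)`: models whose return statistics
`s^π_ψ` agree with the true model's for all policies in `Pol`. -/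
def sketchProperEquiv (ret : RLModel X A → RLPolicy X A → X → Measure ℝ)
    (mstar : RLModel X A) (Ms : Set (RLModel X A))
    (ψ : Measure ℝ → Fin n → ℝ) (Pol : Set (RLPolicy X A)) : Set (RLModel X A) :=
  {mt ∈ Ms | ∀ π ∈ Pol, (fun x => ψ (ret mt π x)) = fun x => ψ (ret mstar π x)}

/-- `P_ψ(ℝ)^X` (functions valued in `D`) is closed under every distributional
Bellman operator. -/
def DomainClosed (γ : ℝ) (D : Set (Measure ℝ)) : Prop :=
  ∀ (m : RLModel X A) (π : RLPolicy X A) (η : X → Measure ℝ),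
    (∀ x, η x ∈ D) → ∀ x, bellman X A γ m π η x ∈ D

/-- The sketch `ψ` is Bellman-closed, witnessed by the operators `Tψ m π`:
`ψ(T^π_m η) = T^π_{ψ,m} (ψ ∘ η)` for all `η` valued in the domain `D` of `ψ`. -/
def BellmanClosed (γ : ℝ) (D : Set (Measure ℝ)) (ψ : Measure ℝ → Fin n → ℝ)
    (Tψ : RLModel X A → RLPolicy X A → (X → Fin n → ℝ) → X → Fin n → ℝ) : Prop :=
  ∀ (m : RLModel X A) (π : RLPolicy X A) (η : X → Measure ℝ), (∀ x, η x ∈ D) →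
    (fun x => ψ (bellman X A γ m π η x)) = Tψ m π fun x => ψ (η x)

end RLPreamble

/-- `ι` is an exact imputation strategy for the sketch `ψ` with domain `D`:
`ψ(ι s) = s` for every `s` in the image `I_ψ = ψ '' D`. -/
def ExactImputation (D : Set (Measure ℝ)) {n : ℕ} (ψ : Measure ℝ → Fin n → ℝ)
    (ι : (Fin n → ℝ) → Measure ℝ) : Prop :=
  ∀ s ∈ ψ '' D, ψ (ι s) = s

/-- The imputation strategy `ι` maps the image `I_ψ = ψ '' D` into the domain `D`. -/
def ImputationInto (D : Set (Measure ℝ)) {n : ℕ} (ψ : Measure ℝ → Fin n → ℝ)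
    (ι : (Fin n → ℝ) → Measure ℝ) : Prop :=
  ∀ s ∈ ψ '' D, ι s ∈ D

/-- The sketch `ψ` is continuous: it maps weakly convergent sequences in its domain `D`
to convergent sequences in `ℝ^n`. -/
def SketchContinuous (D : Set (Measure ℝ)) {n : ℕ} (ψ : Measure ℝ → Fin n → ℝ) : Prop :=
  ∀ (ν : ℕ → Measure ℝ) (νl : Measure ℝ), (∀ k, ν k ∈ D) → νl ∈ D →
    (∀ f : BoundedContinuousFunction ℝ ℝ,
      Tendsto (fun k => ∫ z, f z ∂(ν k)) atTop (nhds (∫ z, f z ∂νl))) →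
    Tendsto (fun k => ψ (ν k)) atTop (nhds (ψ νl))

/-- The quantile function `F⁻¹_ν(u) = inf { z | ν(-∞, z] ≥ u }`. -/
noncomputable def quantileFn (ν : Measure ℝ) (u : ℝ) : ℝ :=
  sInf {z : ℝ | ENNReal.ofReal u ≤ ν (Set.Iic z)}

/-- The spectral risk measure `ρ_φ(ν) = ∫₀¹ F⁻¹_ν(u) φ(u) du`. -/
noncomputable def spectralRisk (φ : ℝ → ℝ) (ν : Measure ℝ) : ℝ :=
  ∫ u in Set.Ioc (0:ℝ) 1, quantileFn ν u * φ u

/-- Suppose the risk measure `ρ` (with domain `Dρ`) lies in the affine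
span of the sketch `ψ`: `ρ(ν) = Σ_i α_i ψ_i(ν) + α₀` on `D ∩ Dρ`, and all
return-distribution values lie in `D ∩ Dρ`. Then any policy optimal with respect to `ρ`
in a model `mt ∈ M^∞_ψ(Π̄)` is optimal with respect to `ρ` in the true model. -/
theorem statement8 {X A : Type} [MeasurableSpace X] [MeasurableSpace A]
    [Fintype X] [Fintype A] [Nonempty X] [Nonempty A]
    (γ : ℝ) (hγ0 : 0 ≤ γ) (hγ1 : γ < 1)
    (ret : RLModel X A → RLPolicy X A → X → Measure ℝ) (hret : IsReturn X A γ ret)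
    (mstar : RLModel X A) (Ms : Set (RLModel X A))
    {n : ℕ} (D : Set (Measure ℝ)) (ψ : Measure ℝ → Fin n → ℝ)
    (Dρ : Set (Measure ℝ)) (ρ : Measure ℝ → ℝ)
    (α : Fin n → ℝ) (α₀ : ℝ)
    (hspan : ∀ ν ∈ D ∩ Dρ, ρ ν = (∑ i, α i * ψ ν i) + α₀)
    (hretDom : ∀ (m : RLModel X A) (π : RLPolicy X A) (x : X), ret m π x ∈ D ∩ Dρ)
    (mt : RLModel X A) (hmt : mt ∈ sketchProperEquiv X A ret mstar Ms ψ Set.univ)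
    (π : RLPolicy X A) (hopt : IsOptimal X A ret ρ mt π) :
    IsOptimal X A ret ρ mstar π := by
  intro x π'
  obtain ⟨hMs, hψ⟩ := hmt
  have key : ∀ π'' : RLPolicy X A, ρ (ret mt π'' x) = ρ (ret mstar π'' x) := by
    intro π''
    have h1 := hspan _ (hretDom mt π'' x)
    have h2 := hspan _ (hretDom mstar π'' x)
    have h3 := congrFun (hψ π'' (Set.mem_univ _)) x
    rw [h1, h2, h3]
  rw [← key π', ← key π]
  exact hopt x π'
end

section
/- Suppose the sketch ψ is both continuous and Bellman-closed and the imputation strategy ι is exact. Then for every integer k ≥ 1 and every Π ⊆ Π̄, M^∞_ψ(Π) = ⋂_{π ∈ Π} M^k_ψ({π}, {s^π_ψ}). -/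
open MeasureTheory Filter

section Statement11Aux

open MeasureTheory Filter
open scoped ENNReal Topology NNReal

set_option linter.unusedSectionVars false

/-- The affine pushforward map is measurable in its translation parameter. -/
lemma s11_measurable_map_aff (γ : ℝ) (ν : Measure ℝ) [SFinite ν] :
    Measurable fun r : ℝ => ν.map (fun z => r + γ * z) := by
  apply Measure.measurable_of_measurable_coe
  intro s hs
  have hT : MeasurableSet {p : ℝ × ℝ | p.1 + γ * p.2 ∈ s} :=
    (measurable_fst.add (measurable_snd.const_mul γ)) hs
  have h2 := measurable_measure_prodMk_left (ν := ν) hT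
  have : (fun r : ℝ => ν.map (fun z => r + γ * z) s)
      = fun r : ℝ => ν (Prod.mk r ⁻¹' {p : ℝ × ℝ | p.1 + γ * p.2 ∈ s}) := by
    funext r
    rw [Measure.map_apply (by fun_prop : Measurable fun z : ℝ => r + γ * z) hs]
    rfl
  rw [this]
  exact h2

lemma s11_bind_map_eq_prod (γ : ℝ) (ρ ν : Measure ℝ) [SFinite ρ] [SFinite ν] :
    (ρ.bind fun r => ν.map fun z => r + γ * z) =
      (ρ.prod ν).map (fun p => p.1 + γ * p.2) := by
  ext s hs
  rw [Measure.bind_apply hs (s11_measurable_map_aff γ ν).aemeasurable,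
    Measure.map_apply (show Measurable fun p : ℝ × ℝ => p.1 + γ * p.2 from measurable_fst.add (measurable_snd.const_mul γ)) hs,
    Measure.prod_apply ((show Measurable fun p : ℝ × ℝ => p.1 + γ * p.2 from measurable_fst.add (measurable_snd.const_mul γ)) hs)]
  refine lintegral_congr fun r => ?_
  rw [Measure.map_apply (by fun_prop : Measurable fun z : ℝ => r + γ * z) hs]
  rfl

/-- On a finite type in which every set is measurable, `bind` is a finite combination. -/
lemma s11_bind_fintype {C : Type} [MeasurableSpace C] [Fintype C]
    (hC : ∀ s : Set C, MeasurableSet s) (μ : Measure C) (f : C → Measure ℝ) :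
    μ.bind f = ∑ c : C, μ {c} • f c := by
  haveI : MeasurableSingletonClass C := ⟨fun c => hC {c}⟩
  have hf : Measurable f := fun _ _ => hC _
  ext s hs
  rw [Measure.bind_apply hs hf.aemeasurable, lintegral_fintype, Measure.finset_sum_apply]
  exact Finset.sum_congr rfl fun c _ => by
    rw [Measure.smul_apply, smul_eq_mul, mul_comm]

lemma s11_bind_sum {C : Type} [Fintype C] (ρ : Measure ℝ) (c : C → ℝ≥0∞)
    (g : C → ℝ → Measure ℝ) (hg : ∀ i, Measurable (g i)) :
    ρ.bind (fun r => ∑ i : C, c i • g i r) = ∑ i : C, c i • ρ.bind (g i) := by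
  have hmeas : Measurable fun r => ∑ i : C, c i • g i r := by
    apply Measure.measurable_of_measurable_coe
    intro s hs
    simp only [Measure.finset_sum_apply, Measure.smul_apply, smul_eq_mul]
    exact Finset.measurable_sum _ fun i _ =>
      ((Measure.measurable_coe hs).comp (hg i)).const_mul _
  ext s hs
  rw [Measure.bind_apply hs hmeas.aemeasurable, Measure.finset_sum_apply]
  have : ∀ r, (∑ i : C, c i • g i r) s = ∑ i : C, c i * g i r s := fun r => by
    rw [Measure.finset_sum_apply]
    exact Finset.sum_congr rfl fun i _ => by rw [Measure.smul_apply, smul_eq_mul]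
  simp_rw [this]
  have hgi : ∀ i : C, Measurable fun r => (g i r) s := fun i =>
    (Measure.measurable_coe hs).comp (hg i)
  have hgi' : ∀ i : C, Measurable fun r => c i * (g i r) s := fun i => (hgi i).const_mul _
  rw [lintegral_finset_sum' _ fun i _ => (hgi' i).aemeasurable]
  refine Finset.sum_congr rfl fun i _ => ?_
  rw [lintegral_const_mul _ (hgi i), Measure.smul_apply, smul_eq_mul,
    Measure.bind_apply hs (hg i).aemeasurable]

lemma s11_sum_singleton_eq_one {C : Type} [MeasurableSpace C] [Fintype C]
    (hC : ∀ s : Set C, MeasurableSet s) (μ : Measure C) [IsProbabilityMeasure μ] :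
    ∑ c : C, μ {c} = 1 := by
  haveI : MeasurableSingletonClass C := ⟨fun c => hC {c}⟩
  classical
  have h := measure_biUnion_finset (μ := μ) (s := (Finset.univ : Finset C))
    (f := fun c => ({c} : Set C)) ?_ ?_
  · have huniv : ⋃ c ∈ (Finset.univ : Finset C), ({c} : Set C) = Set.univ := by
      ext y; simp
    rw [huniv, measure_univ] at h
    exact h.symm
  · intro i _ j _ hij
    simp [Function.onFun, Set.disjoint_singleton, hij]
  · exact fun c _ => hC {c}

section NF

variable {X A : Type} [MeasurableSpace X] [MeasurableSpace A] [Fintype X] [Fintype A]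
  [Nonempty X] [Nonempty A]

/-- Normal form of the Bellman operator when all sets of states and actions
are measurable. -/
lemma s11_bellman_NF (hX : ∀ s : Set X, MeasurableSet s) (hA : ∀ s : Set A, MeasurableSet s)
    (γ : ℝ) (m : RLModel X A) (π : RLPolicy X A) (η : X → Measure ℝ)
    (hη : ∀ x, IsProbabilityMeasure (η x)) (x : X) :
    bellman X A γ m π η x =
      ∑ a : A, (π.1 x) {a} •
        ∑ x' : X, (m.P x a) {x'} • ((m.R x a).prod (η x')).map (fun p => p.1 + γ * p.2) := by
  haveI : ∀ x', IsProbabilityMeasure (η x') := hη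
  haveI : ∀ (a : A), IsProbabilityMeasure (m.R x a) := m.R_prob x
  show ((π.1 x).bind fun a => (m.R x a).bind fun r => (m.P x a).bind fun x' =>
      (η x').map fun z => r + γ * z) = _
  rw [s11_bind_fintype hA]
  refine Finset.sum_congr rfl fun a _ => ?_
  congr 1
  have h1 : (fun r : ℝ => (m.P x a).bind fun x' => (η x').map fun z => r + γ * z)
      = fun r : ℝ => ∑ x' : X, (m.P x a) {x'} • (η x').map fun z => r + γ * z := by
    funext r; exact s11_bind_fintype hX _ _
  rw [h1, s11_bind_sum _ _ _ (fun x' => s11_measurable_map_aff γ (η x'))]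
  refine Finset.sum_congr rfl fun x' _ => ?_
  rw [s11_bind_map_eq_prod]

lemma s11_bellman_prob (hX : ∀ s : Set X, MeasurableSet s) (hA : ∀ s : Set A, MeasurableSet s)
    (γ : ℝ) (m : RLModel X A) (π : RLPolicy X A) (η : X → Measure ℝ)
    (hη : ∀ x, IsProbabilityMeasure (η x)) (x : X) :
    IsProbabilityMeasure (bellman X A γ m π η x) := by
  rw [s11_bellman_NF hX hA γ m π η hη x]
  have hK : ∀ (a : A) (x' : X),
      (((m.R x a).prod (η x')).map (fun p : ℝ × ℝ => p.1 + γ * p.2)) Set.univ = 1 := by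
    intro a x'
    haveI := m.R_prob x a; haveI := hη x'
    haveI : IsProbabilityMeasure (((m.R x a).prod (η x')).map (fun p : ℝ × ℝ => p.1 + γ * p.2)) :=
      Measure.isProbabilityMeasure_map (measurable_fst.add (measurable_snd.const_mul γ)).aemeasurable
    exact measure_univ
  constructor
  rw [Measure.finset_sum_apply]
  have h2 : ∀ a : A, (((∑ x' : X, (m.P x a) {x'} •
      ((m.R x a).prod (η x')).map (fun p : ℝ × ℝ => p.1 + γ * p.2))) : Measure ℝ) Set.univ
      = 1 := by
    intro a
    rw [Measure.finset_sum_apply]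
    haveI := m.P_prob x a
    calc ∑ x' : X, ((m.P x a) {x'} • ((m.R x a).prod (η x')).map
          (fun p : ℝ × ℝ => p.1 + γ * p.2)) Set.univ
        = ∑ x' : X, (m.P x a) {x'} := by
          refine Finset.sum_congr rfl fun x' _ => ?_
          rw [Measure.smul_apply, smul_eq_mul, hK a x', mul_one]
      _ = 1 := s11_sum_singleton_eq_one hX _
  calc ∑ a : A, ((π.1 x) {a} • ∑ x' : X, (m.P x a) {x'} • ((m.R x a).prod (η x')).map
        (fun p : ℝ × ℝ => p.1 + γ * p.2)) Set.univ
      = ∑ a : A, (π.1 x) {a} := by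
        refine Finset.sum_congr rfl fun a _ => ?_
        rw [Measure.smul_apply, smul_eq_mul, h2 a, mul_one]
    _ = 1 := by haveI := π.2 x; exact s11_sum_singleton_eq_one hA _

lemma s11_iterate_prob (hX : ∀ s : Set X, MeasurableSet s) (hA : ∀ s : Set A, MeasurableSet s)
    (γ : ℝ) (m : RLModel X A) (π : RLPolicy X A) (η : X → Measure ℝ)
    (hη : ∀ x, IsProbabilityMeasure (η x)) :
    ∀ (j : ℕ) (x : X), IsProbabilityMeasure ((bellman X A γ m π)^[j] η x) := by
  intro j
  induction j with
  | zero => exact hη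
  | succ j ih =>
    intro x
    rw [Function.iterate_succ_apply']
    exact s11_bellman_prob hX hA γ m π _ ih x

end NF

section IntegralLemmas

lemma s11_integrable_of_bounded {α : Type*} [MeasurableSpace α] {g : α → ℝ} {B : ℝ}
    (hg : Measurable g) (hb : ∀ z, |g z| ≤ B) (μ : Measure α) [IsFiniteMeasure μ] :
    Integrable g μ :=
  Integrable.mono' (integrable_const B) hg.aestronglyMeasurable
    (Eventually.of_forall fun z => by simpa [Real.norm_eq_abs] using hb z)

lemma s11_integral_K (γ : ℝ) (ρ ν : Measure ℝ) [IsProbabilityMeasure ρ]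
    [IsProbabilityMeasure ν] {g : ℝ → ℝ} {B : ℝ} (hg : Measurable g) (hb : ∀ z, |g z| ≤ B) :
    ∫ z, g z ∂((ρ.prod ν).map fun p => p.1 + γ * p.2)
      = ∫ r, ∫ z, g (r + γ * z) ∂ν ∂ρ := by
  rw [integral_map (φ := fun p : ℝ × ℝ => p.1 + γ * p.2) (measurable_fst.add (measurable_snd.const_mul γ)).aemeasurable
    hg.aestronglyMeasurable]
  exact integral_prod _ (s11_integrable_of_bounded
    (hg.comp (measurable_fst.add (measurable_snd.const_mul γ))) (fun p => hb _) _)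

lemma s11_integrable_inner (γ : ℝ) (ν : Measure ℝ) [IsProbabilityMeasure ν]
    (ρ : Measure ℝ) [IsProbabilityMeasure ρ]
    {g : ℝ → ℝ} {B : ℝ} (hg : Measurable g) (hb : ∀ z, |g z| ≤ B) :
    Integrable (fun r => ∫ z, g (r + γ * z) ∂ν) ρ := by
  have hB : 0 ≤ B := le_trans (abs_nonneg _) (hb 0)
  have hsm : StronglyMeasurable fun r => ∫ z, g (r + γ * z) ∂ν :=
    (hg.comp (measurable_fst.add (measurable_snd.const_mul γ))).stronglyMeasurable.integral_prod_right'
  refine Integrable.mono' (integrable_const B) hsm.aestronglyMeasurable ?_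
  refine Eventually.of_forall fun r => ?_
  rw [Real.norm_eq_abs]
  calc |∫ z, g (r + γ * z) ∂ν| ≤ ∫ z, |g (r + γ * z)| ∂ν := by
        simpa [Real.norm_eq_abs] using
          norm_integral_le_integral_norm (μ := ν) (fun z => g (r + γ * z))
    _ ≤ ∫ _z, B ∂ν := by
        refine integral_mono ((s11_integrable_of_bounded
          (hg.comp (measurable_const.add (measurable_id.const_mul γ)))
          (fun z => hb _) ν).abs) (integrable_const B) fun z => hb _
    _ = B := by simp

lemma s11_abs_integral_diff_le (ρ : Measure ℝ) [IsProbabilityMeasure ρ] {u v : ℝ → ℝ}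
    (hu : Integrable u ρ) (hv : Integrable v ρ) {c : ℝ} (h : ∀ r, |u r - v r| ≤ c) :
    |∫ r, u r ∂ρ - ∫ r, v r ∂ρ| ≤ c := by
  rw [← integral_sub hu hv]
  have := norm_integral_le_of_norm_le_const (μ := ρ) (f := fun r => u r - v r) (C := c)
    (Eventually.of_forall fun r => by simpa [Real.norm_eq_abs] using h r)
  simpa [Real.norm_eq_abs] using this

lemma s11_integral_sum_smul {C : Type} [Fintype C] (c : C → ℝ≥0∞) (hc : ∀ i, c i ≠ ⊤)
    (μ : C → Measure ℝ) (g : ℝ → ℝ) (hint : ∀ i, Integrable g (μ i)) :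
    ∫ z, g z ∂(∑ i : C, c i • μ i) = ∑ i : C, (c i).toReal * ∫ z, g z ∂(μ i) := by
  rw [integral_finset_sum_measure (fun i _ => (hint i).smul_measure (hc i))]
  exact Finset.sum_congr rfl fun i _ => by rw [integral_smul_measure, smul_eq_mul]

lemma s11_abs_weighted_diff_le {C : Type} [Fintype C] (w : C → ℝ) (hw : ∀ i, 0 ≤ w i)
    (hw1 : ∑ i : C, w i = 1) (u v : C → ℝ) {c : ℝ} (h : ∀ i, |u i - v i| ≤ c) :
    |∑ i : C, w i * u i - ∑ i : C, w i * v i| ≤ c := by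
  rw [← Finset.sum_sub_distrib]
  calc |∑ i : C, (w i * u i - w i * v i)| ≤ ∑ i : C, |w i * u i - w i * v i| :=
        Finset.abs_sum_le_sum_abs _ _
    _ = ∑ i : C, w i * |u i - v i| := by
        refine Finset.sum_congr rfl fun i _ => ?_
        rw [← mul_sub, abs_mul, abs_of_nonneg (hw i)]
    _ ≤ ∑ i : C, w i * c := Finset.sum_le_sum fun i _ =>
        mul_le_mul_of_nonneg_left (h i) (hw i)
    _ = c := by rw [← Finset.sum_mul, hw1, one_mul]

lemma s11_toReal_singleton_sum_one {C : Type} [MeasurableSpace C] [Fintype C]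
    (hC : ∀ s : Set C, MeasurableSet s) (μ : Measure C) [IsProbabilityMeasure μ] :
    ∑ c : C, (μ {c}).toReal = 1 := by
  have h := s11_sum_singleton_eq_one hC μ
  have := congrArg ENNReal.toReal h
  rwa [ENNReal.toReal_sum (fun c _ => measure_ne_top μ _), ENNReal.toReal_one] at this

end IntegralLemmas

section Contract

variable {X A : Type} [MeasurableSpace X] [MeasurableSpace A] [Fintype X] [Fintype A]
  [Nonempty X] [Nonempty A]

/-- The key contraction estimate for iterates of the distributional Bellman operator,
tested against bounded Lipschitz functions. -/
lemma s11_contract (hX : ∀ s : Set X, MeasurableSet s) (hA : ∀ s : Set A, MeasurableSet s)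
    {γ : ℝ} (hγ0 : 0 ≤ γ) (m : RLModel X A) (π : RLPolicy X A)
    (η η' : X → Measure ℝ) (hη : ∀ x, IsProbabilityMeasure (η x))
    (hη' : ∀ x, IsProbabilityMeasure (η' x))
    (hint : ∀ x, Integrable id (η x)) (hint' : ∀ x, Integrable id (η' x)) {B : ℝ} :
    ∀ (j : ℕ) (K : ℝ) (g : ℝ → ℝ), 0 ≤ K → Measurable g → (∀ z, |g z| ≤ B) →
      (∀ z w, |g z - g w| ≤ K * |z - w|) → ∀ x : X,
      |(∫ z, g z ∂((bellman X A γ m π)^[j] η x)) -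
          ∫ z, g z ∂((bellman X A γ m π)^[j] η' x)| ≤
        K * γ ^ j * (∑ y : X, ((∫ z, |z| ∂η y) + ∫ z, |z| ∂η' y)) := by
  intro j
  induction j with
  | zero =>
    intro K g hK hg hb hLip x
    simp only [Function.iterate_zero, id_eq, pow_zero, mul_one]
    haveI := hη x; haveI := hη' x
    have key : ∀ (μ : Measure ℝ), IsProbabilityMeasure μ → Integrable id μ →
        |∫ z, (g z - g 0) ∂μ| ≤ K * ∫ z, |z| ∂μ := by
      intro μ hμ hμint
      haveI := hμ
      have h1 : Integrable g μ := s11_integrable_of_bounded hg hb μ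
      have h2 : Integrable (fun z => |z|) μ := hμint.abs
      calc |∫ z, (g z - g 0) ∂μ| ≤ ∫ z, |g z - g 0| ∂μ := by
            simpa [Real.norm_eq_abs] using
              norm_integral_le_integral_norm (μ := μ) (fun z => g z - g 0)
        _ ≤ ∫ z, K * |z| ∂μ := by
            refine integral_mono (h1.sub (integrable_const (g 0))).abs (h2.const_mul K)
              fun z => ?_
            simpa using hLip z 0
        _ = K * ∫ z, |z| ∂μ := integral_const_mul K _
    have e1 : ∀ (μ : Measure ℝ), IsProbabilityMeasure μ →
        ∫ z, (g z - g 0) ∂μ = (∫ z, g z ∂μ) - g 0 := by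
      intro μ hμ
      haveI := hμ
      rw [integral_sub (s11_integrable_of_bounded hg hb μ) (integrable_const (g 0))]
      simp
    have hsum : |(∫ z, g z ∂η x) - ∫ z, g z ∂η' x| ≤
        K * ((∫ z, |z| ∂η x) + ∫ z, |z| ∂η' x) := by
      have h3 := key (η x) (hη x) (hint x)
      have h4 := key (η' x) (hη' x) (hint' x)
      rw [e1 (η x) (hη x), e1 (η' x) (hη' x)] at *
      have : (∫ z, g z ∂η x) - ∫ z, g z ∂η' x =
          ((∫ z, g z ∂η x) - g 0) - ((∫ z, g z ∂η' x) - g 0) := by ring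
      rw [this]
      calc |((∫ z, g z ∂η x) - g 0) - ((∫ z, g z ∂η' x) - g 0)| ≤
            |(∫ z, g z ∂η x) - g 0| + |(∫ z, g z ∂η' x) - g 0| := abs_sub _ _
        _ ≤ K * (∫ z, |z| ∂η x) + K * (∫ z, |z| ∂η' x) := add_le_add h3 h4
        _ = K * ((∫ z, |z| ∂η x) + ∫ z, |z| ∂η' x) := by ring
    refine hsum.trans (mul_le_mul_of_nonneg_left ?_ hK)
    refine Finset.single_le_sum (f := fun y => (∫ z, |z| ∂η y) + ∫ z, |z| ∂η' y)
      (fun y _ => add_nonneg (integral_nonneg fun z => abs_nonneg z)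
        (integral_nonneg fun z => abs_nonneg z)) (Finset.mem_univ x)
  | succ j ih =>
    intro K g hK hg hb hLip x
    set C : ℝ := ∑ y : X, ((∫ z, |z| ∂η y) + ∫ z, |z| ∂η' y) with hC
    have hC0 : 0 ≤ C := Finset.sum_nonneg fun y _ =>
      add_nonneg (integral_nonneg fun z => abs_nonneg z) (integral_nonneg fun z => abs_nonneg z)
    rw [Function.iterate_succ_apply', Function.iterate_succ_apply']
    set ηj := (bellman X A γ m π)^[j] η with hηj
    set ηj' := (bellman X A γ m π)^[j] η' with hηj'
    have hpj : ∀ y, IsProbabilityMeasure (ηj y) := s11_iterate_prob hX hA γ m π η hη j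
    have hpj' : ∀ y, IsProbabilityMeasure (ηj' y) := s11_iterate_prob hX hA γ m π η' hη' j
    haveI := hpj; haveI := hpj'
    haveI : ∀ a, IsProbabilityMeasure (m.R x a) := m.R_prob x
    haveI : ∀ a, IsProbabilityMeasure (m.P x a) := m.P_prob x
    haveI : IsProbabilityMeasure (π.1 x) := π.2 x
    have hKmeas : ∀ (a : A) (ν : Measure ℝ), IsProbabilityMeasure ν →
        IsProbabilityMeasure (((m.R x a).prod ν).map (fun p : ℝ × ℝ => p.1 + γ * p.2)) := by
      intro a ν hν
      haveI := hν
      exact Measure.isProbabilityMeasure_map (measurable_fst.add (measurable_snd.const_mul γ)).aemeasurable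
    have hIK : ∀ (a : A) (ν : Measure ℝ), IsProbabilityMeasure ν →
        Integrable g (((m.R x a).prod ν).map (fun p : ℝ × ℝ => p.1 + γ * p.2)) := by
      intro a ν hν
      haveI := hKmeas a ν hν
      exact s11_integrable_of_bounded hg hb _
    -- expand both integrals into the normal form
    have hexp : ∀ (ζ : X → Measure ℝ) (hζ : ∀ y, IsProbabilityMeasure (ζ y)),
        ∫ z, g z ∂(bellman X A γ m π ζ x) =
          ∑ a : A, ((π.1 x) {a}).toReal *
            ∑ x' : X, ((m.P x a) {x'}).toReal *
              ∫ z, g z ∂(((m.R x a).prod (ζ x')).map (fun p : ℝ × ℝ => p.1 + γ * p.2)) := by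
      intro ζ hζ
      rw [s11_bellman_NF hX hA γ m π ζ hζ x]
      rw [s11_integral_sum_smul _ (fun a => measure_ne_top _ _) _ g ?hint1]
      case hint1 =>
        intro a
        rw [integrable_finset_sum_measure]
        intro x' _
        exact ((hIK a (ζ x') (hζ x')).smul_measure (measure_ne_top _ _))
      refine Finset.sum_congr rfl fun a _ => ?_
      congr 1
      exact s11_integral_sum_smul _ (fun x' => measure_ne_top _ _) _ g
        (fun x' => hIK a (ζ x') (hζ x'))
    rw [hexp ηj hpj, hexp ηj' hpj']
    -- inner estimate
    have hinner : ∀ (a : A) (x' : X),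
        |(∫ z, g z ∂(((m.R x a).prod (ηj x')).map (fun p : ℝ × ℝ => p.1 + γ * p.2))) -
            ∫ z, g z ∂(((m.R x a).prod (ηj' x')).map (fun p : ℝ × ℝ => p.1 + γ * p.2))| ≤
          K * γ * (γ ^ j * C) := by
      intro a x'
      rw [s11_integral_K γ _ _ hg hb, s11_integral_K γ _ _ hg hb]
      refine s11_abs_integral_diff_le _ (s11_integrable_inner γ _ _ hg hb)
        (s11_integrable_inner γ _ _ hg hb) fun r => ?_
      have := ih (K * γ) (fun z => g (r + γ * z)) (mul_nonneg hK hγ0)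
        (hg.comp (measurable_const.add (measurable_id.const_mul γ)))
        (fun z => hb _) ?hlip x'
      case hlip =>
        intro z w
        calc |g (r + γ * z) - g (r + γ * w)| ≤ K * |(r + γ * z) - (r + γ * w)| := hLip _ _
          _ = K * γ * |z - w| := by
              rw [show (r + γ * z) - (r + γ * w) = γ * (z - w) by ring, abs_mul,
                abs_of_nonneg hγ0]
              ring
      calc |(∫ z, g (r + γ * z) ∂ηj x') - ∫ z, g (r + γ * z) ∂ηj' x'|
          ≤ K * γ * γ ^ j * C := this
        _ = K * γ * (γ ^ j * C) := by ring
    have houter : |(∑ a : A, ((π.1 x) {a}).toReal *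
          ∑ x' : X, ((m.P x a) {x'}).toReal *
            ∫ z, g z ∂(((m.R x a).prod (ηj x')).map (fun p : ℝ × ℝ => p.1 + γ * p.2))) -
        ∑ a : A, ((π.1 x) {a}).toReal *
          ∑ x' : X, ((m.P x a) {x'}).toReal *
            ∫ z, g z ∂(((m.R x a).prod (ηj' x')).map (fun p : ℝ × ℝ => p.1 + γ * p.2))| ≤
          K * γ * (γ ^ j * C) := by
      refine s11_abs_weighted_diff_le _ (fun a => ENNReal.toReal_nonneg)
        (s11_toReal_singleton_sum_one hA _) _ _ fun a => ?_
      haveI := m.P_prob x a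
      exact s11_abs_weighted_diff_le _ (fun x' => ENNReal.toReal_nonneg)
        (s11_toReal_singleton_sum_one hX _) _ _ fun x' => hinner a x'
    refine houter.trans (le_of_eq ?_)
    rw [pow_succ]
    ring

end Contract

section WeakConv

lemma s11_abs_min_sub_min (a b : ℝ) : |min 1 a - min 1 b| ≤ |a - b| := by
  rcases le_total a 1 with ha | ha <;> rcases le_total b 1 with hb | hb
  · rw [min_eq_right ha, min_eq_right hb]
  · rw [min_eq_right ha, min_eq_left hb]
    have h1 : a - b ≤ |a - b| := le_abs_self _
    have h2 : -(a - b) ≤ |a - b| := neg_le_abs _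
    rw [abs_le]; constructor <;> linarith
  · rw [min_eq_left ha, min_eq_right hb]
    have h1 : a - b ≤ |a - b| := le_abs_self _
    have h2 : -(a - b) ≤ |a - b| := neg_le_abs _
    rw [abs_le]; constructor <;> linarith
  · rw [min_eq_left ha, min_eq_left hb]; simpa using abs_nonneg (a - b)

/-- From convergence of integrals of bounded Lipschitz functions to weak convergence
(testing against all bounded continuous functions). -/
lemma s11_tendsto_BCF {ν : ℕ → Measure ℝ} {νl : Measure ℝ}
    (hν : ∀ i, IsProbabilityMeasure (ν i)) (hνl : IsProbabilityMeasure νl)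
    (h : ∀ (K : ℝ) (g : ℝ → ℝ), 0 ≤ K → Measurable g → (∀ z, |g z| ≤ 1) →
      (∀ z w, |g z - g w| ≤ K * |z - w|) →
      Tendsto (fun i => ∫ z, g z ∂ν i) atTop (𝓝 (∫ z, g z ∂νl)))
    (f : BoundedContinuousFunction ℝ ℝ) :
    Tendsto (fun i => ∫ z, f z ∂ν i) atTop (𝓝 (∫ z, f z ∂νl)) := by
  haveI := hνl
  set P : ℕ → ProbabilityMeasure ℝ := fun i => ⟨ν i, hν i⟩ with hP
  set Pl : ProbabilityMeasure ℝ := ⟨νl, hνl⟩ with hPl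
  have main : Tendsto P atTop (𝓝 Pl) := by
    apply MeasureTheory.tendsto_of_forall_isOpen_le_liminf
    intro G hG
    -- reduce to an `ℝ≥0∞`-valued inequality
    suffices E : (νl G : ℝ≥0∞) ≤ atTop.liminf fun i => (ν i G : ℝ≥0∞) by
      have aux : (ENNReal.ofNNReal (atTop.liminf fun i => P i G)) =
          atTop.liminf (ENNReal.ofNNReal ∘ fun i => P i G) := by
        refine Monotone.map_liminf_of_continuousAt (F := atTop) ENNReal.coe_mono
          (fun i => P i G) ENNReal.continuous_coe.continuousAt ?_ ?_
        · exact IsBoundedUnder.isCoboundedUnder_ge ⟨1, eventually_map.mpr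
            (Eventually.of_forall fun i => (P i).apply_le_one G)⟩
        · exact ⟨0, eventually_map.mpr (Eventually.of_forall fun i => zero_le)⟩
      rw [← ENNReal.coe_le_coe, aux]
      have e1 : ∀ i, (ENNReal.ofNNReal ∘ fun i => P i G) i = (ν i G : ℝ≥0∞) := fun i => by
        simp [hP, ProbabilityMeasure.ennreal_coeFn_eq_coeFn_toMeasure]
      have e2 : (ENNReal.ofNNReal (Pl G)) = (νl G : ℝ≥0∞) := by
        simp [hPl, ProbabilityMeasure.ennreal_coeFn_eq_coeFn_toMeasure]
      rw [e2]
      calc (νl G : ℝ≥0∞) ≤ atTop.liminf fun i => (ν i G : ℝ≥0∞) := E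
        _ = atTop.liminf (ENNReal.ofNNReal ∘ fun i => P i G) := by
            refine liminf_congr (Eventually.of_forall fun i => (e1 i).symm)
    by_cases huniv : G = Set.univ
    · subst huniv
      simp only [measure_univ]
      rw [liminf_const]
    -- G ≠ univ: use Lipschitz approximations of the indicator
    have hGc : Gᶜ.Nonempty := Set.nonempty_compl.mpr huniv
    set d : ℝ → ℝ := fun y => Metric.infDist y Gᶜ with hd
    set F : ℕ → ℝ → ℝ := fun M y => min 1 ((M : ℝ) * d y) with hF
    have hdcont : Continuous d := Metric.continuous_infDist_pt Gᶜ
    have hFmeas : ∀ M, Measurable (F M) :=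
      fun M => (continuous_const.min (continuous_const.mul hdcont)).measurable
    have hF0 : ∀ M y, 0 ≤ F M y := fun M y =>
      le_min zero_le_one (mul_nonneg (Nat.cast_nonneg M) Metric.infDist_nonneg)
    have hF1 : ∀ M y, F M y ≤ 1 := fun M y => min_le_left _ _
    have hFb : ∀ M y, |F M y| ≤ 1 := fun M y => by
      rw [abs_of_nonneg (hF0 M y)]; exact hF1 M y
    have hFlip : ∀ M z w, |F M z - F M w| ≤ (M : ℝ) * |z - w| := by
      intro M z w
      calc |F M z - F M w| ≤ |(M : ℝ) * d z - (M : ℝ) * d w| := s11_abs_min_sub_min _ _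
        _ = (M : ℝ) * |d z - d w| := by rw [← mul_sub, abs_mul, abs_of_nonneg (Nat.cast_nonneg M)]
        _ ≤ (M : ℝ) * |z - w| := by
            refine mul_le_mul_of_nonneg_left ?_ (Nat.cast_nonneg M)
            rw [abs_le]
            constructor
            · have := Metric.infDist_le_infDist_add_dist (x := w) (y := z) (s := Gᶜ)
              rw [Real.dist_eq, abs_sub_comm] at this
              have habs : |w - z| = |z - w| := abs_sub_comm w z
              nlinarith [le_abs_self (z - w), neg_le_abs (z - w), this]
            · have := Metric.infDist_le_infDist_add_dist (x := z) (y := w) (s := Gᶜ)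
              rw [Real.dist_eq] at this
              nlinarith [le_abs_self (z - w), neg_le_abs (z - w), abs_sub_comm w z]
    have hzero : ∀ M y, y ∉ G → F M y = 0 := by
      intro M y hy
      have : d y = 0 := Metric.infDist_zero_of_mem (Set.mem_compl hy)
      simp [hF, this]
    -- step 1
    have step1 : ∀ M : ℕ, ENNReal.ofReal (∫ y, F M y ∂νl) ≤ atTop.liminf fun i => ν i G := by
      intro M
      have hT : Tendsto (fun i => ∫ y, F M y ∂ν i) atTop (𝓝 (∫ y, F M y ∂νl)) :=
        h M (F M) (Nat.cast_nonneg M) (hFmeas M) (hFb M) (hFlip M)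
      have hTo : Tendsto (fun i => ENNReal.ofReal (∫ y, F M y ∂ν i)) atTop
          (𝓝 (ENNReal.ofReal (∫ y, F M y ∂νl))) :=
        (ENNReal.continuous_ofReal.tendsto _).comp hT
      have hle : ∀ i, ENNReal.ofReal (∫ y, F M y ∂ν i) ≤ ν i G := fun i =>
        integral_le_measure (fun y _ => hF1 M y) (fun y hy => le_of_eq (hzero M y hy))
      calc ENNReal.ofReal (∫ y, F M y ∂νl)
          = atTop.liminf (fun i => ENNReal.ofReal (∫ y, F M y ∂ν i)) := hTo.liminf_eq.symm
        _ ≤ atTop.liminf (fun i => ν i G) := liminf_le_liminf (Eventually.of_forall hle)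
    -- step 2
    have step2 : (νl G : ℝ≥0∞) ≤ ⨆ M : ℕ, ENNReal.ofReal (∫ y, F M y ∂νl) := by
      have hint : ∀ M, Integrable (F M) νl := fun M =>
        s11_integrable_of_bounded (hFmeas M) (hFb M) νl
      have heq : ∀ M : ℕ, ENNReal.ofReal (∫ y, F M y ∂νl)
          = ∫⁻ y, ENNReal.ofReal (F M y) ∂νl := fun M =>
        ofReal_integral_eq_lintegral_ofReal (hint M) (Eventually.of_forall (hF0 M))
      simp_rw [heq]
      rw [← lintegral_iSup (fun M => (hFmeas M).ennreal_ofReal) ?mono]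
      case mono =>
        intro M M' hMM' y
        exact ENNReal.ofReal_le_ofReal (min_le_min (le_refl 1)
          (mul_le_mul_of_nonneg_right (Nat.cast_le.mpr hMM') Metric.infDist_nonneg))
      have hptw : ∀ y, G.indicator (fun _ => (1 : ℝ≥0∞)) y ≤ ⨆ M : ℕ, ENNReal.ofReal (F M y) := by
        intro y
        by_cases hy : y ∈ G
        · rw [Set.indicator_of_mem hy]
          have hdpos : 0 < d y := by
            rw [hd]
            exact (hG.isClosed_compl.notMem_iff_infDist_pos hGc).mp (Set.notMem_compl_iff.mpr hy)
          obtain ⟨M, hM⟩ := exists_nat_ge (1 / d y)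
          have h1 : (1 : ℝ) ≤ (M : ℝ) * d y := by
            rw [div_le_iff₀ hdpos] at hM
            linarith
          refine le_iSup_of_le M ?_
          rw [hF]
          simp only [min_eq_left h1]
          simp
        · rw [Set.indicator_of_notMem hy]
          exact zero_le
      calc (νl G : ℝ≥0∞) = ∫⁻ y, G.indicator (fun _ => (1 : ℝ≥0∞)) y ∂νl := by
            rw [lintegral_indicator hG.measurableSet]
            simp
        _ ≤ ∫⁻ y, ⨆ M : ℕ, ENNReal.ofReal (F M y) ∂νl := lintegral_mono hptw
    exact step2.trans (iSup_le step1)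
  have := ProbabilityMeasure.tendsto_iff_forall_integral_tendsto.mp main f
  exact this

end WeakConv

section Phase0

lemma s11_integral_map_aff (γ r : ℝ) (ν : Measure ℝ) [IsProbabilityMeasure ν]
    (hν : Integrable id ν) :
    ∫ z, z ∂(ν.map fun z => r + γ * z) = r + γ * ∫ z, z ∂ν := by
  have h := integral_map (μ := ν) (f := fun z : ℝ => z)
    (by fun_prop : Measurable fun z : ℝ => r + γ * z).aemeasurable aestronglyMeasurable_id
  rw [h]
  show ∫ x, (r + γ * x) ∂ν = _
  have hγz : Integrable (fun z : ℝ => γ * z) ν := by simpa using hν.const_mul γ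
  rw [integral_add (integrable_const r) hγz, integral_const, integral_const_mul]
  simp

lemma s11_dirac_nonnull {C : Type} [MeasurableSpace C] {c₀ c₁ : C}
    (hns : ∀ T : Set C, MeasurableSet T → (c₀ ∈ T ↔ c₁ ∈ T)) :
    ∀ N : Set C, Measure.dirac c₀ N = 0 → c₀ ∉ N ∧ c₁ ∉ N := by
  intro N hN
  obtain ⟨T, hNT, hTmeas, hT0⟩ := exists_measurable_superset_of_null hN
  have h0 : c₀ ∉ T := by
    intro h
    rw [Measure.dirac_apply_of_mem h] at hT0
    exact one_ne_zero hT0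
  exact ⟨fun h => h0 (hNT h), fun h => h0 ((hns T hTmeas).mpr (hNT h))⟩

lemma s11_ae_value_eq {C : Type} [MeasurableSpace C] {c₀ c₁ : C}
    (hns : ∀ T : Set C, MeasurableSet T → (c₀ ∈ T ↔ c₁ ∈ T))
    {η g : C → Measure ℝ} (hae : η =ᵐ[Measure.dirac c₀] g) :
    η c₀ = g c₀ ∧ η c₁ = g c₁ := by
  have hnull : Measure.dirac c₀ {x | ¬ η x = g x} = 0 := by
    have := hae
    rwa [Filter.EventuallyEq, ae_iff] at this
  have h := s11_dirac_nonnull hns _ hnull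
  exact ⟨not_not.mp h.1, not_not.mp h.2⟩

lemma s11_meas_fun_const {C : Type} [MeasurableSpace C] {c₀ c₁ : C}
    (hns : ∀ T : Set C, MeasurableSet T → (c₀ ∈ T ↔ c₁ ∈ T))
    {g : C → Measure ℝ} (hg : Measurable g) : g c₀ = g c₁ := by
  by_contra hne
  have hex : ∃ s : Set ℝ, MeasurableSet s ∧ g c₀ s ≠ g c₁ s := by
    by_contra hcon
    push_neg at hcon
    exact hne (Measure.ext fun s hs => hcon s hs)
  obtain ⟨s, hs, hval⟩ := hex
  have hT : MeasurableSet ((fun x => g x s) ⁻¹' {g c₀ s}) :=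
    ((Measure.measurable_coe hs).comp hg) (measurableSet_singleton _)
  have h1 : c₁ ∈ (fun x => g x s) ⁻¹' {g c₀ s} := (hns _ hT).mp rfl
  exact hval (Set.mem_preimage.mp h1).symm

lemma s11_not_sep {C : Type} [MeasurableSpace C] {c₀ c₁ : C}
    (hcon : ∀ T : Set C, MeasurableSet T → c₀ ∈ T → c₁ ∈ T) :
    ∀ T : Set C, MeasurableSet T → (c₀ ∈ T ↔ c₁ ∈ T) := by
  intro T hT
  refine ⟨hcon T hT, fun h1 => ?_⟩
  by_contra h0
  exact (hcon Tᶜ hT.compl h0) h1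

lemma s11_sep_to_all {C : Type} [MeasurableSpace C] [Fintype C]
    (hsep : ∀ c₀ c₁ : C, c₀ ≠ c₁ → ∃ T : Set C, MeasurableSet T ∧ c₀ ∈ T ∧ c₁ ∉ T) :
    ∀ S : Set C, MeasurableSet S := by
  classical
  have hsing : ∀ c : C, MeasurableSet ({c} : Set C) := by
    intro c
    have hUeq : ({c} : Set C) = ⋂ y : C,
        if h : y = c then Set.univ else (hsep c y fun hcy => h hcy.symm).choose := by
      ext z
      simp only [Set.mem_singleton_iff, Set.mem_iInter]
      constructor
      · intro hz y
        subst hz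
        by_cases h : y = z
        · simp [h]
        · simp only [dif_neg h]
          exact (hsep z y fun hcy => h hcy.symm).choose_spec.2.1
      · intro hz
        by_contra hzc
        have := hz z
        rw [dif_neg hzc] at this
        exact (hsep c z fun hcy => hzc hcy.symm).choose_spec.2.2 this
    rw [hUeq]
    refine MeasurableSet.iInter fun y => ?_
    by_cases h : y = c
    · simp [h]
    · simp only [dif_neg h]
      exact (hsep c y fun hcy => h hcy.symm).choose_spec.1
  haveI : MeasurableSingletonClass C := ⟨hsing⟩
  exact fun S => (Set.toFinite S).measurableSet

variable {X A : Type} [MeasurableSpace X] [MeasurableSpace A] [Fintype X] [Fintype A]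
  [Nonempty X] [Nonempty A]

lemma s11_phase0X {γ : ℝ} (hγ : γ ≠ 0)
    (ret : RLModel X A → RLPolicy X A → X → Measure ℝ) (hret : IsReturn X A γ ret) :
    ∀ S : Set X, MeasurableSet S := by
  refine s11_sep_to_all ?_
  intro x₀ x₁ hne
  by_contra hcon
  push_neg at hcon
  have hns : ∀ T : Set X, MeasurableSet T → (x₀ ∈ T ↔ x₁ ∈ T) :=
    s11_not_sep fun T hT h0 => hcon T hT h0
  classical
  set c : X → ℝ := fun x => if x = x₀ then 1 else 0 with hc
  have hRint : ∀ (x : X) (_a : A), Integrable id (Measure.dirac (c x)) := fun x _ =>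
    (integrable_const (c x)).congr (MeasureTheory.ae_eq_dirac (id : ℝ → ℝ)).symm
  set m₀ : RLModel X A :=
    ⟨fun _ _ => Measure.dirac x₀, fun x _ => Measure.dirac (c x),
      fun _ _ => Measure.dirac.isProbabilityMeasure,
      fun _ _ => Measure.dirac.isProbabilityMeasure, hRint⟩ with hm₀
  set π₀ : RLPolicy X A :=
    ⟨fun _ => Measure.dirac (Classical.arbitrary A),
      fun _ => Measure.dirac.isProbabilityMeasure⟩ with hπ₀
  obtain ⟨hprops, hfix, -⟩ := hret m₀ π₀
  set η := ret m₀ π₀ with hη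
  haveI : ∀ x, IsProbabilityMeasure (η x) := fun x => (hprops x).1
  have hbell : ∀ x : X, bellman X A γ m₀ π₀ η x
      = (Measure.dirac (c x)).bind (fun r => (Measure.dirac x₀).bind
          (fun x' => (η x').map fun z => r + γ * z)) := by
    intro x
    show (Measure.dirac (Classical.arbitrary A)).bind
        (fun _a => (Measure.dirac (c x)).bind fun r => (Measure.dirac x₀).bind
          fun x' => (η x').map fun z => r + γ * z) = _
    rw [Measure.bind_const, measure_univ, one_smul]
  by_cases hmeas : AEMeasurable η (Measure.dirac x₀)
  · obtain ⟨g, hgmeas, hgae⟩ := hmeas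
    have hvals := s11_ae_value_eq hns hgae
    have hgeq := s11_meas_fun_const hns hgmeas
    have hηeq : η x₀ = η x₁ := by rw [hvals.1, hgeq, ← hvals.2]
    have hbind : ∀ r : ℝ, (Measure.dirac x₀).bind (fun x' => (η x').map fun z => r + γ * z)
        = (η x₀).map (fun z => r + γ * z) := by
      intro r
      have hb : Measurable fun z : ℝ => r + γ * z := by fun_prop
      have hae2 : (fun x' => (η x').map fun z => r + γ * z)
          =ᵐ[Measure.dirac x₀] (fun x' => (g x').map fun z => r + γ * z) :=
        hgae.fun_comp (fun μ => μ.map fun z => r + γ * z)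
      have hstep : (Measure.dirac x₀).bind (fun x' => (η x').map fun z => r + γ * z)
          = (Measure.dirac x₀).bind (fun x' => (g x').map fun z => r + γ * z) := by
        unfold Measure.bind
        rw [Measure.map_congr hae2]
      have hmeasg : Measurable fun x' => (g x').map fun z : ℝ => r + γ * z :=
        (Measure.measurable_map _ hb).comp hgmeas
      rw [hstep, Measure.dirac_bind hmeasg x₀, ← hvals.1]
    have heq : ∀ x : X, η x = (η x₀).map (fun z => c x + γ * z) := by
      intro x
      have h1 := congrFun hfix x
      have h2 := hbell x
      rw [← h1, h2]
      simp_rw [hbind]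
      exact Measure.dirac_bind (s11_measurable_map_aff γ (η x₀)) (c x)
    have hint := (hprops x₀).2
    have m0 : ∫ z, z ∂(η x₀) = c x₀ + γ * ∫ z, z ∂(η x₀) := by
      conv_lhs => rw [heq x₀]
      exact s11_integral_map_aff γ (c x₀) (η x₀) hint
    have m1 : ∫ z, z ∂(η x₀) = c x₁ + γ * ∫ z, z ∂(η x₀) := by
      conv_lhs => rw [hηeq, heq x₁]
      exact s11_integral_map_aff γ (c x₁) (η x₀) hint
    have hc0 : c x₀ = 1 := if_pos rfl
    have hc1 : c x₁ = 0 := if_neg fun h => hne h.symm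
    rw [hc0] at m0; rw [hc1] at m1
    linarith
  · have hzero : ∀ r : ℝ,
        ¬ AEMeasurable (fun x' => (η x').map fun z => r + γ * z) (Measure.dirac x₀) := by
      intro r hAE
      apply hmeas
      have hinv : Measurable fun z : ℝ => (z - r) / γ := by fun_prop
      have hcomp : AEMeasurable
          (fun x' => ((η x').map fun z : ℝ => r + γ * z).map fun z : ℝ => (z - r) / γ)
          (Measure.dirac x₀) :=
        (Measure.measurable_map (fun z : ℝ => (z - r) / γ) hinv).comp_aemeasurable hAE
      have heq2 : (fun x' => ((η x').map fun z => r + γ * z).map fun z => (z - r) / γ) = η := by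
        funext x'
        rw [Measure.map_map hinv (by fun_prop)]
        have hcompid : ((fun z : ℝ => (z - r) / γ) ∘ fun z : ℝ => r + γ * z) = id := by
          funext z
          simp only [Function.comp_apply, id_eq]
          field_simp
          ring
        rw [hcompid, Measure.map_id]
      rwa [heq2] at hcomp
    have hx := congrFun hfix x₀
    rw [hbell x₀] at hx
    have hzero2 : ∀ r : ℝ,
        (Measure.dirac x₀).bind (fun x' => (η x').map fun z => r + γ * z) = 0 := by
      intro r
      unfold Measure.bind
      rw [Measure.map_of_not_aemeasurable (hzero r), Measure.join_zero]
    simp_rw [hzero2] at hx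
    rw [Measure.bind_zero_right'] at hx
    have huniv := measure_univ (μ := η x₀)
    rw [← hx] at huniv
    simp at huniv

lemma s11_phase0A (γ : ℝ) (hX : ∀ S : Set X, MeasurableSet S)
    (ret : RLModel X A → RLPolicy X A → X → Measure ℝ) (hret : IsReturn X A γ ret) :
    ∀ S : Set A, MeasurableSet S := by
  refine s11_sep_to_all ?_
  intro a₀ a₁ hne
  by_contra hcon
  push_neg at hcon
  have hns : ∀ T : Set A, MeasurableSet T → (a₀ ∈ T ↔ a₁ ∈ T) :=
    s11_not_sep fun T hT h0 => hcon T hT h0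
  classical
  set xb : X := Classical.arbitrary X with hxb
  set c : A → ℝ := fun a => if a = a₀ then 1 else 0 with hc
  have hRint : ∀ (_x : X) (a : A), Integrable id (Measure.dirac (c a)) := fun _ a =>
    (integrable_const (c a)).congr (MeasureTheory.ae_eq_dirac (id : ℝ → ℝ)).symm
  set m₁ : RLModel X A :=
    ⟨fun _ _ => Measure.dirac xb, fun _ a => Measure.dirac (c a),
      fun _ _ => Measure.dirac.isProbabilityMeasure,
      fun _ _ => Measure.dirac.isProbabilityMeasure, hRint⟩ with hm₁
  set π₁ : RLPolicy X A :=
    ⟨fun _ => Measure.dirac a₀, fun _ => Measure.dirac.isProbabilityMeasure⟩ with hπ₁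
  obtain ⟨hprops, hfix, -⟩ := hret m₁ π₁
  set η := ret m₁ π₁ with hη
  haveI : ∀ x, IsProbabilityMeasure (η x) := fun x => (hprops x).1
  have hmeasη : Measurable η := fun _ _ => hX _
  have hF : ∀ a : A, (Measure.dirac (c a)).bind (fun r => (Measure.dirac xb).bind
      (fun x' => (η x').map fun z => r + γ * z)) = (η xb).map (fun z => c a + γ * z) := by
    intro a
    have hinner : ∀ r : ℝ, (Measure.dirac xb).bind (fun x' => (η x').map fun z => r + γ * z)
        = (η xb).map fun z => r + γ * z := by
      intro r
      have hm2 : Measurable fun x' => (η x').map fun z : ℝ => r + γ * z :=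
        (Measure.measurable_map _ (by fun_prop)).comp hmeasη
      exact Measure.dirac_bind hm2 xb
    simp_rw [hinner]
    exact Measure.dirac_bind (s11_measurable_map_aff γ (η xb)) (c a)
  have hbell : bellman X A γ m₁ π₁ η xb
      = (Measure.dirac a₀).bind (fun a => (η xb).map fun z => c a + γ * z) := by
    show (Measure.dirac a₀).bind
        (fun a => (Measure.dirac (c a)).bind fun r => (Measure.dirac xb).bind
          fun x' => (η x').map fun z => r + γ * z) = _
    congr 1
    funext a
    exact hF a
  by_cases hFmeas : AEMeasurable (fun a => (η xb).map fun z => c a + γ * z) (Measure.dirac a₀)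
  · obtain ⟨g, hgmeas, hgae⟩ := hFmeas
    have hvals := s11_ae_value_eq hns hgae
    have hgeq := s11_meas_fun_const hns hgmeas
    have hFeq : (η xb).map (fun z => c a₀ + γ * z) = (η xb).map (fun z => c a₁ + γ * z) := by
      rw [hvals.1, hgeq, ← hvals.2]
    have hint := (hprops xb).2
    have h1 := s11_integral_map_aff γ (c a₀) (η xb) hint
    have h2 := s11_integral_map_aff γ (c a₁) (η xb) hint
    rw [hFeq, h2] at h1
    have hc0 : c a₀ = 1 := if_pos rfl
    have hc1 : c a₁ = 0 := if_neg fun h => hne h.symm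
    rw [hc0, hc1] at h1
    linarith
  · have hx := congrFun hfix xb
    rw [hbell] at hx
    have hzero : (Measure.dirac a₀).bind (fun a => (η xb).map fun z => c a + γ * z) = 0 := by
      unfold Measure.bind
      rw [Measure.map_of_not_aemeasurable hFmeas, Measure.join_zero]
    rw [hzero] at hx
    have huniv := measure_univ (μ := η xb)
    rw [← hx] at huniv
    simp at huniv

end Phase0

section SketchAlg

variable {X A : Type} [MeasurableSpace X] [MeasurableSpace A] [Fintype X] [Fintype A]
  [Nonempty X] [Nonempty A]

/-- For `γ = 0` the Bellman operator does not depend on a probability-valued argument. -/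
lemma s11_bellman_zero (m : RLModel X A) (π : RLPolicy X A) (η : X → Measure ℝ)
    (hη : ∀ x, IsProbabilityMeasure (η x)) :
    bellman X A 0 m π η = fun x => (π.1 x).bind (fun a => m.R x a) := by
  funext x
  show (π.1 x).bind (fun a => (m.R x a).bind fun r => (m.P x a).bind fun x' =>
      (η x').map fun z => r + 0 * z) = _
  congr 1
  funext a
  have hin : ∀ r : ℝ, (m.P x a).bind (fun x' => (η x').map fun z => r + 0 * z)
      = Measure.dirac r := by
    intro r
    have hconst : (fun x' : X => (η x').map fun z : ℝ => r + 0 * z)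
        = fun _ => Measure.dirac r := by
      funext x'
      have hz : (fun z : ℝ => r + 0 * z) = fun _ : ℝ => r := by funext z; ring
      rw [hz, Measure.map_const, (hη x').measure_univ, one_smul]
    rw [hconst, Measure.bind_const, (m.P_prob x a).measure_univ, one_smul]
  simp_rw [hin]
  exact Measure.bind_dirac

lemma s11_sketch_iter {γ : ℝ} {n : ℕ} (D : Set (Measure ℝ)) (ψ : Measure ℝ → Fin n → ℝ)
    (ι : (Fin n → ℝ) → Measure ℝ) (hDcl : DomainClosed X A γ D)
    (Tψ : RLModel X A → RLPolicy X A → (X → Fin n → ℝ) → X → Fin n → ℝ)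
    (hTψ : BellmanClosed X A γ D ψ Tψ)
    (hexact : ExactImputation D ψ ι) (hinto : ImputationInto D ψ ι)
    (m : RLModel X A) (π : RLPolicy X A) (η₀ : X → Measure ℝ) (hη₀ : ∀ x, η₀ x ∈ D) :
    ∀ j : ℕ, (∀ x, (bellman X A γ m π)^[j] η₀ x ∈ D) ∧
      (fun x => ψ ((bellman X A γ m π)^[j] η₀ x)) =
        (sketchBellman X A γ m π ψ ι)^[j] (fun x => ψ (η₀ x)) := by
  intro j
  induction j with
  | zero => exact ⟨hη₀, rfl⟩
  | succ j ih =>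
    obtain ⟨ihD, ihs⟩ := ih
    constructor
    · intro x
      rw [Function.iterate_succ_apply']
      exact hDcl m π _ ihD x
    · rw [Function.iterate_succ_apply']
      conv_rhs => rw [Function.iterate_succ_apply']
      have h1 : (fun x => ψ (bellman X A γ m π ((bellman X A γ m π)^[j] η₀) x))
          = Tψ m π ((sketchBellman X A γ m π ψ ι)^[j] (fun x => ψ (η₀ x))) := by
        rw [← ihs]
        exact hTψ m π _ ihD
      have h2 : sketchBellman X A γ m π ψ ι
            ((sketchBellman X A γ m π ψ ι)^[j] (fun x => ψ (η₀ x)))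
          = Tψ m π ((sketchBellman X A γ m π ψ ι)^[j] (fun x => ψ (η₀ x))) := by
        set s' := (sketchBellman X A γ m π ψ ι)^[j] (fun x => ψ (η₀ x)) with hs'
        have hs'D : ∀ x, s' x ∈ ψ '' D := by
          intro x
          rw [← ihs]
          exact ⟨_, ihD x, rfl⟩
        have h3 : (fun x => ψ (bellman X A γ m π (fun y => ι (s' y)) x))
            = Tψ m π (fun x => ψ (ι (s' x))) := hTψ m π _ (fun y => hinto _ (hs'D y))
        have h4 : (fun x => ψ (ι (s' x))) = s' := funext fun x => hexact _ (hs'D x)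
        show (fun x => ψ (bellman X A γ m π (fun y => ι (s' y)) x)) = _
        rw [h3, h4]
      rw [h1, h2]

lemma s11_SB_fixed {γ : ℝ} {n : ℕ} (D : Set (Measure ℝ)) (ψ : Measure ℝ → Fin n → ℝ)
    (ι : (Fin n → ℝ) → Measure ℝ)
    (Tψ : RLModel X A → RLPolicy X A → (X → Fin n → ℝ) → X → Fin n → ℝ)
    (hTψ : BellmanClosed X A γ D ψ Tψ)
    (hexact : ExactImputation D ψ ι) (hinto : ImputationInto D ψ ι)
    (m : RLModel X A) (π : RLPolicy X A) (η : X → Measure ℝ)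
    (hηD : ∀ x, η x ∈ D) (hfixη : bellman X A γ m π η = η) :
    sketchBellman X A γ m π ψ ι (fun x => ψ (η x)) = fun x => ψ (η x) := by
  set s' := fun x => ψ (η x) with hs'def
  have hs'D : ∀ x, s' x ∈ ψ '' D := fun x => ⟨_, hηD x, rfl⟩
  have h3 : (fun x => ψ (bellman X A γ m π (fun y => ι (s' y)) x))
      = Tψ m π (fun x => ψ (ι (s' x))) := hTψ m π _ (fun y => hinto _ (hs'D y))
  have h4 : (fun x => ψ (ι (s' x))) = s' := funext fun x => hexact _ (hs'D x)
  have h5 : (fun x => ψ (bellman X A γ m π η x)) = Tψ m π s' := hTψ m π η hηD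
  show (fun x => ψ (bellman X A γ m π (fun y => ι (s' y)) x)) = s'
  rw [h3, h4, ← h5, hfixη]

end SketchAlg

end Statement11Aux

open scoped Topology

/-- If the sketch `ψ` is continuous and Bellman-closed and the
imputation strategy `ι` is exact, then for every `k ≥ 1` and every set of policies
`Pol`, `M^∞_ψ(Pol) = ⋂_{π ∈ Pol} M^k_ψ({π}, {s^π_ψ})` (within the model set `Ms`). -/
theorem statement11 {X A : Type} [MeasurableSpace X] [MeasurableSpace A]
    [Fintype X] [Fintype A] [Nonempty X] [Nonempty A]
    (γ : ℝ) (hγ0 : 0 ≤ γ) (hγ1 : γ < 1)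
    (ret : RLModel X A → RLPolicy X A → X → Measure ℝ) (hret : IsReturn X A γ ret)
    (mstar : RLModel X A) (Ms : Set (RLModel X A))
    {n : ℕ} (D : Set (Measure ℝ)) (ψ : Measure ℝ → Fin n → ℝ)
    (ι : (Fin n → ℝ) → Measure ℝ)
    (hDcl : DomainClosed X A γ D)
    (hBC : ∃ Tψ, BellmanClosed X A γ D ψ Tψ)
    (hcont : SketchContinuous D ψ)
    (hexact : ExactImputation D ψ ι)
    (hinto : ImputationInto D ψ ι)
    (hretD : ∀ (m : RLModel X A) (π : RLPolicy X A) (x : X), ret m π x ∈ D)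
    (k : ℕ) (hk : 1 ≤ k) (Pol : Set (RLPolicy X A)) :
    sketchProperEquiv X A ret mstar Ms ψ Pol =
      Ms ∩ ⋂ π ∈ Pol,
        sketchEquiv X A γ mstar Ms ψ ι k {π} {fun x => ψ (ret mstar π x)} := by
  obtain ⟨Tψ, hTψ⟩ := hBC
  classical
  -- the true sketch is a fixed point of the projected operator of the true model
  have hstar_fix : ∀ π : RLPolicy X A,
      sketchBellman X A γ mstar π ψ ι (fun x => ψ (ret mstar π x))
        = fun x => ψ (ret mstar π x) := fun π =>
    s11_SB_fixed D ψ ι Tψ hTψ hexact hinto mstar π (ret mstar π) (hretD mstar π)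
      (hret mstar π).2.1
  have hstar_iter : ∀ π : RLPolicy X A,
      (sketchBellman X A γ mstar π ψ ι)^[k] (fun x => ψ (ret mstar π x))
        = fun x => ψ (ret mstar π x) := fun π =>
    Function.iterate_fixed (hstar_fix π) k
  ext mt
  constructor
  · rintro ⟨hMs, hall⟩
    refine ⟨hMs, ?_⟩
    refine Set.mem_iInter₂.mpr fun π hπ => ?_
    refine ⟨hMs, ?_⟩
    rintro π' hπ' s' hs'
    rw [Set.mem_singleton_iff] at hπ' hs'
    subst hπ'; subst hs'
    have hts : (fun x => ψ (ret mt π' x)) = fun x => ψ (ret mstar π' x) := hall π' hπ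
    have hfixt : sketchBellman X A γ mt π' ψ ι (fun x => ψ (ret mt π' x))
        = fun x => ψ (ret mt π' x) :=
      s11_SB_fixed D ψ ι Tψ hTψ hexact hinto mt π' (ret mt π') (hretD mt π')
        (hret mt π').2.1
    rw [hts] at hfixt
    rw [hstar_iter π', Function.iterate_fixed hfixt k]
  · rintro ⟨hMs, hI⟩
    refine ⟨hMs, ?_⟩
    intro π hπ
    obtain ⟨-, hiter⟩ := Set.mem_iInter₂.mp hI π hπ
    have hiter2 := hiter π rfl (fun x => ψ (ret mstar π x)) rfl
    have hfixk : (sketchBellman X A γ mt π ψ ι)^[k] (fun x => ψ (ret mstar π x))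
        = fun x => ψ (ret mstar π x) := by
      rw [← hiter2, hstar_iter π]
    have hmsprob : ∀ x, IsProbabilityMeasure (ret mstar π x) := fun x => ((hret mstar π).1 x).1
    have hmsint : ∀ x, Integrable id (ret mstar π x) := fun x => ((hret mstar π).1 x).2
    have hmtprob : ∀ x, IsProbabilityMeasure (ret mt π x) := fun x => ((hret mt π).1 x).1
    have hmtint : ∀ x, Integrable id (ret mt π x) := fun x => ((hret mt π).1 x).2
    have hsk := s11_sketch_iter D ψ ι hDcl Tψ hTψ hexact hinto mt π (ret mstar π)
      (hretD mstar π)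
    rcases eq_or_lt_of_le hγ0 with hγeq | hγpos
    · -- the case γ = 0
      have hζ : ∀ j : ℕ, 1 ≤ j →
          (bellman X A γ mt π)^[j] (ret mstar π) = ret mt π := by
        intro j hj
        induction j with
        | zero => omega
        | succ j ihj =>
          rcases Nat.eq_zero_or_pos j with h0 | hpos
          · subst h0
            rw [Function.iterate_succ_apply', Function.iterate_zero_apply, ← hγeq]
            rw [s11_bellman_zero mt π (ret mstar π) hmsprob,
              ← s11_bellman_zero mt π (ret mt π) hmtprob, hγeq]
            exact (hret mt π).2.1
          · rw [Function.iterate_succ_apply', ihj hpos]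
            exact (hret mt π).2.1
      have hsk2 := (hsk k).2
      rw [hζ k hk] at hsk2
      rw [hsk2, hfixk]
    · -- the case γ > 0
      have hX := s11_phase0X (ne_of_gt hγpos) ret hret
      have hA := s11_phase0A γ hX ret hret
      have hζD : ∀ (j : ℕ) (x : X), (bellman X A γ mt π)^[j] (ret mstar π) x ∈ D :=
        fun j => (hsk j).1
      have hζsk : ∀ j : ℕ, (fun x => ψ ((bellman X A γ mt π)^[j] (ret mstar π) x))
          = (sketchBellman X A γ mt π ψ ι)^[j] (fun x => ψ (ret mstar π x)) :=
        fun j => (hsk j).2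
      have hζprob : ∀ (j : ℕ) (x : X),
          IsProbabilityMeasure ((bellman X A γ mt π)^[j] (ret mstar π) x) :=
        s11_iterate_prob hX hA γ mt π (ret mstar π) hmsprob
      have hconst : ∀ i : ℕ, (fun x => ψ ((bellman X A γ mt π)^[k * i] (ret mstar π) x))
          = fun x => ψ (ret mstar π x) := by
        intro i
        rw [hζsk (k * i), Function.iterate_mul]
        exact Function.iterate_fixed hfixk i
      have hfixiter : ∀ j : ℕ, (bellman X A γ mt π)^[j] (ret mt π) = ret mt π :=
        fun j => Function.iterate_fixed (hret mt π).2.1 j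
      funext x
      have hlim : ∀ (K : ℝ) (g : ℝ → ℝ), 0 ≤ K → Measurable g → (∀ z, |g z| ≤ 1) →
          (∀ z w, |g z - g w| ≤ K * |z - w|) →
          Tendsto (fun i => ∫ z, g z ∂((bellman X A γ mt π)^[k * i] (ret mstar π) x)) atTop
            (𝓝 (∫ z, g z ∂(ret mt π x))) := by
        intro K g hK hg hb hLip
        set C : ℝ := ∑ y : X, ((∫ z, |z| ∂(ret mstar π y)) + ∫ z, |z| ∂(ret mt π y)) with hC
        have hbound : ∀ i : ℕ,
            |(∫ z, g z ∂((bellman X A γ mt π)^[k * i] (ret mstar π) x)) -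
              ∫ z, g z ∂(ret mt π x)| ≤ K * γ ^ (k * i) * C := by
          intro i
          have h := s11_contract hX hA hγ0 mt π (ret mstar π) (ret mt π) hmsprob hmtprob
            hmsint hmtint (k * i) K g hK hg hb hLip x
          rwa [hfixiter (k * i)] at h
        have htend0 : Tendsto (fun i : ℕ => K * γ ^ (k * i) * C) atTop (𝓝 0) := by
          have h1 : Tendsto (fun i : ℕ => (γ ^ k) ^ i) atTop (𝓝 0) :=
            tendsto_pow_atTop_nhds_zero_of_lt_one (pow_nonneg hγ0 k)
              (pow_lt_one₀ hγ0 hγ1 (by omega))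
          have h2 : (fun i : ℕ => K * γ ^ (k * i) * C) = fun i => K * C * (γ ^ k) ^ i := by
            funext i; rw [pow_mul]; ring
          rw [h2]
          simpa using h1.const_mul (K * C)
        have hz : Tendsto (fun i =>
            (∫ z, g z ∂((bellman X A γ mt π)^[k * i] (ret mstar π) x)) -
              ∫ z, g z ∂(ret mt π x)) atTop (𝓝 0) :=
          squeeze_zero_norm (fun i => by simpa [Real.norm_eq_abs] using hbound i) htend0
        have := hz.add_const (∫ z, g z ∂(ret mt π x))
        simpa using this
      have hBCF : ∀ f : BoundedContinuousFunction ℝ ℝ,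
          Tendsto (fun i => ∫ z, f z ∂((bellman X A γ mt π)^[k * i] (ret mstar π) x)) atTop
            (𝓝 (∫ z, f z ∂(ret mt π x))) :=
        s11_tendsto_BCF (fun i => hζprob (k * i) x) (hmtprob x) hlim
      have hψ := hcont (fun i => (bellman X A γ mt π)^[k * i] (ret mstar π) x) (ret mt π x)
        (fun i => hζD (k * i) x) (hretD mt π x) hBCF
      have hconst2 : (fun i : ℕ => ψ ((bellman X A γ mt π)^[k * i] (ret mstar π) x))
          = fun _ => ψ (ret mstar π x) := by
        funext i
        exact congrFun (hconst i) x
      rw [hconst2] at hψ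
      exact tendsto_nhds_unique hψ tendsto_const_nhds
end

section
/- Let μ be a Borel probability measure on ℝ with finite first moment and let τ ∈ (0,1). If the quantile function F⁻¹_μ is strictly increasing on (0,1), then CVaR_τ(μ) = E_{Z∼μ}[ Z | Z ≤ F⁻¹_μ(τ) ], i.e., (1/τ)∫₀^τ F⁻¹_μ(u) du = (1/μ({z : z ≤ F⁻¹_μ(τ)})) ∫_{(−∞, F⁻¹_μ(τ)]} z dμ(z). -/
open MeasureTheory

open ProbabilityTheory Set Filter Topology

section Aux

variable {μ : Measure ℝ} [IsProbabilityMeasure μ]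

lemma quantileFn_eq_sInf_cdf (u : ℝ) :
    quantileFn μ u = sInf {z : ℝ | u ≤ cdf μ z} := by
  unfold quantileFn
  congr 1
  ext z
  rw [mem_setOf_eq, mem_setOf_eq, ← ofReal_cdf μ z,
    ENNReal.ofReal_le_ofReal_iff (cdf_nonneg μ z)]

lemma quantile_set_nonempty {u : ℝ} (hu1 : u < 1) : {z : ℝ | u ≤ cdf μ z}.Nonempty :=
  ((tendsto_cdf_atTop μ).eventually_const_le hu1).exists

lemma quantile_set_bddBelow {u : ℝ} (hu0 : 0 < u) : BddBelow {z : ℝ | u ≤ cdf μ z} := by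
  obtain ⟨M, hM⟩ := Filter.eventually_atBot.mp ((tendsto_cdf_atBot μ).eventually_lt_const hu0)
  refine ⟨M, fun z hz => ?_⟩
  by_contra h
  exact absurd hz (not_le.2 (hM z (le_of_not_ge h)))

lemma le_cdf_quantileFn {u : ℝ} (hu0 : 0 < u) (hu1 : u < 1) :
    u ≤ cdf μ (quantileFn μ u) := by
  rw [quantileFn_eq_sInf_cdf]
  set S := {z : ℝ | u ≤ cdf μ z} with hS
  set a := sInf S with ha
  by_contra h
  push_neg at h
  have hrc : Filter.Tendsto (cdf μ) (𝓝[≥] a) (𝓝 (cdf μ a)) := (cdf μ).right_continuous a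
  have hev : ∀ᶠ x in 𝓝[≥] a, cdf μ x < u := hrc.eventually_lt_const h
  obtain ⟨b, hab, hb⟩ := (nhdsGE_basis_of_exists_gt (exists_gt a)).eventually_iff.mp hev
  have hlb : b ∈ lowerBounds S := by
    intro z hz
    by_contra hbz
    push_neg at hbz
    have haz : a ≤ z := csInf_le (quantile_set_bddBelow hu0) hz
    exact absurd hz (not_le.2 (hb ⟨haz, hbz⟩))
  have : b ≤ a := le_csInf (quantile_set_nonempty hu1) hlb
  exact absurd hab (not_lt.2 this)

lemma quantileFn_le_iff {u : ℝ} (hu0 : 0 < u) (hu1 : u < 1) (x : ℝ) :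
    quantileFn μ u ≤ x ↔ u ≤ cdf μ x := by
  constructor
  · intro h
    exact (le_cdf_quantileFn hu0 hu1).trans (monotone_cdf μ h)
  · intro h
    rw [quantileFn_eq_sInf_cdf]
    exact csInf_le (quantile_set_bddBelow hu0) h

lemma quantile_preimage_inter (x : ℝ) :
    quantileFn μ ⁻¹' Iic x ∩ Ioo 0 1 = Iic (cdf μ x) ∩ Ioo (0:ℝ) 1 := by
  ext u
  simp only [mem_inter_iff, mem_preimage, mem_Iic, mem_Ioo, and_congr_left_iff]
  intro hu
  exact quantileFn_le_iff hu.1 hu.2 x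

/-- The extension of the quantile function by `0` outside `(0,1)` is measurable. -/
lemma measurable_quantile_indicator :
    Measurable (Set.indicator (Ioo (0:ℝ) 1) (quantileFn μ)) := by
  apply measurable_of_Iic
  intro x
  have : Set.indicator (Ioo (0:ℝ) 1) (quantileFn μ) ⁻¹' Iic x =
      (Iic (cdf μ x) ∩ Ioo (0:ℝ) 1) ∪ (if 0 ≤ x then (Ioo (0:ℝ) 1)ᶜ else ∅) := by
    ext u
    by_cases hu : u ∈ Ioo (0:ℝ) 1
    · simp only [mem_preimage, mem_Iic, Set.indicator_of_mem hu, mem_union, mem_inter_iff, hu,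
        and_true, mem_Iic]
      constructor
      · intro h
        left
        exact (quantileFn_le_iff hu.1 hu.2 x).mp h
      · intro h
        rcases h with h | h
        · exact (quantileFn_le_iff hu.1 hu.2 x).mpr h
        · split_ifs at h with hx
          · exact absurd hu (by simpa using h)
          · exact absurd h (notMem_empty u)
    · simp only [mem_preimage, mem_Iic, Set.indicator_of_notMem hu, mem_union, mem_inter_iff, hu,
        and_false, false_or]
      split_ifs with hx
      · simp [hu, hx]
      · simp [hx]
  rw [this]
  refine ((measurableSet_Iic.inter measurableSet_Ioo).union ?_)
  split_ifs
  · exact measurableSet_Ioo.compl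
  · exact MeasurableSet.empty

lemma aemeasurable_quantileFn :
    AEMeasurable (quantileFn μ) (volume.restrict (Ioo (0:ℝ) 1)) := by
  refine ⟨Set.indicator (Ioo (0:ℝ) 1) (quantileFn μ), measurable_quantile_indicator, ?_⟩
  exact ((ae_restrict_iff' measurableSet_Ioo).mpr
    (ae_of_all _ fun u hu => (Set.indicator_of_mem hu _).symm))

/-- The pushforward of Lebesgue measure on `(0,1)` under the quantile function is `μ`. -/
lemma map_quantileFn :
    Measure.map (quantileFn μ) (volume.restrict (Ioo (0:ℝ) 1)) = μ := by
  have hprob : IsProbabilityMeasure (volume.restrict (Ioo (0:ℝ) 1)) := by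
    constructor
    simp [Real.volume_Ioo]
  have : IsProbabilityMeasure (Measure.map (quantileFn μ) (volume.restrict (Ioo (0:ℝ) 1))) :=
    Measure.isProbabilityMeasure_map aemeasurable_quantileFn
  refine Measure.ext_of_Iic _ _ (fun x => ?_)
  rw [Measure.map_apply_of_aemeasurable aemeasurable_quantileFn measurableSet_Iic,
    Measure.restrict_apply' measurableSet_Ioo, quantile_preimage_inter, ← ofReal_cdf μ x]
  rcases le_or_gt 1 (cdf μ x) with h | h
  · have h1 : cdf μ x = 1 := le_antisymm (cdf_le_one μ x) h
    have : Iic (cdf μ x) ∩ Ioo (0:ℝ) 1 = Ioo (0:ℝ) 1 := by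
      apply inter_eq_self_of_subset_right
      intro u hu
      exact le_of_lt (lt_of_lt_of_le hu.2 h)
    rw [this, Real.volume_Ioo, h1]
    norm_num
  · have : Iic (cdf μ x) ∩ Ioo (0:ℝ) 1 = Ioc (0:ℝ) (cdf μ x) := by
      ext u
      simp only [mem_inter_iff, mem_Iic, mem_Ioo, mem_Ioc]
      constructor
      · rintro ⟨h1, h2, _⟩; exact ⟨h2, h1⟩
      · rintro ⟨h1, h2⟩; exact ⟨h2, h1, lt_of_le_of_lt h2 h⟩
    rw [this, Real.volume_Ioc]
    norm_num

lemma cdf_quantileFn_eq {τ : ℝ} (hτ : τ ∈ Set.Ioo (0:ℝ) 1)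
    (hmono : StrictMonoOn (quantileFn μ) (Set.Ioo 0 1)) :
    cdf μ (quantileFn μ τ) = τ := by
  refine le_antisymm ?_ (le_cdf_quantileFn hτ.1 hτ.2)
  by_contra h
  push_neg at h
  set σ := min ((τ + cdf μ (quantileFn μ τ)) / 2) ((τ + 1) / 2) with hσ
  have hτσ : τ < σ := by
    apply lt_min <;> linarith [hτ.2]
  have hσ1 : σ < 1 := by
    apply min_lt_of_right_lt
    linarith [hτ.2]
  have hσc : σ ≤ cdf μ (quantileFn μ τ) := by
    apply min_le_of_left_le
    linarith
  have h1 : quantileFn μ σ ≤ quantileFn μ τ :=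
    (quantileFn_le_iff (hτ.1.trans hτσ) hσ1 _).mpr hσc
  have h2 : quantileFn μ τ < quantileFn μ σ :=
    hmono hτ ⟨hτ.1.trans hτσ, hσ1⟩ hτσ
  linarith

lemma measure_Iic_quantileFn {τ : ℝ} (hτ : τ ∈ Set.Ioo (0:ℝ) 1)
    (hmono : StrictMonoOn (quantileFn μ) (Set.Ioo 0 1)) :
    μ (Set.Iic (quantileFn μ τ)) = ENNReal.ofReal τ := by
  rw [← ofReal_cdf μ, cdf_quantileFn_eq hτ hmono]

end Aux

/-- For a Borel probability measure `μ` on ℝ with finite first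
moment and `τ ∈ (0,1)`, if the quantile function of `μ` is strictly increasing on
`(0,1)`, then `CVaR_τ(μ) = E_{Z∼μ}[Z | Z ≤ F⁻¹_μ(τ)]`, i.e.
`(1/τ) ∫₀^τ F⁻¹_μ(u) du = (1/μ(Iic F⁻¹_μ(τ))) ∫_{Iic F⁻¹_μ(τ)} z dμ(z)`. -/
theorem statement14 (μ : Measure ℝ) [IsProbabilityMeasure μ]
    (hint : Integrable id μ) (τ : ℝ) (hτ : τ ∈ Set.Ioo (0:ℝ) 1)
    (hmono : StrictMonoOn (quantileFn μ) (Set.Ioo 0 1)) :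
    (1 / τ) * ∫ u in Set.Ioc (0:ℝ) τ, quantileFn μ u =
      (μ (Set.Iic (quantileFn μ τ))).toReal⁻¹ *
        ∫ z in Set.Iic (quantileFn μ τ), z ∂μ := by
  have hmeas : μ (Set.Iic (quantileFn μ τ)) = ENNReal.ofReal τ :=
    measure_Iic_quantileFn hτ hmono
  have hτR : (μ (Set.Iic (quantileFn μ τ))).toReal = τ := by
    rw [hmeas, ENNReal.toReal_ofReal hτ.1.le]
  have hint2 : ∫ z in Set.Iic (quantileFn μ τ), z ∂μ
      = ∫ u in Set.Ioc (0:ℝ) τ, quantileFn μ u := by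
    have hsm : AEStronglyMeasurable (fun z : ℝ => z)
        (Measure.map (quantileFn μ) (volume.restrict (Set.Ioo (0:ℝ) 1))) := by
      rw [map_quantileFn (μ := μ)]
      exact aestronglyMeasurable_id
    have hmap : ∀ x₀ : ℝ, ∫ z in Set.Iic x₀, z ∂μ =
        ∫ u in quantileFn μ ⁻¹' Set.Iic x₀, quantileFn μ u
          ∂(volume.restrict (Set.Ioo (0:ℝ) 1)) := by
      intro x₀
      conv_lhs => rw [← map_quantileFn (μ := μ)]
      rw [setIntegral_map measurableSet_Iic hsm aemeasurable_quantileFn]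
    have hset : quantileFn μ ⁻¹' Set.Iic (quantileFn μ τ) ∩ Set.Ioo 0 1
        = Set.Ioc (0:ℝ) τ := by
      rw [quantile_preimage_inter, cdf_quantileFn_eq hτ hmono]
      ext u
      simp only [Set.mem_inter_iff, Set.mem_Iic, Set.mem_Ioo, Set.mem_Ioc]
      constructor
      · rintro ⟨h1, h2, _⟩; exact ⟨h2, h1⟩
      · rintro ⟨h1, h2⟩; exact ⟨h2, h1, lt_of_le_of_lt h2 hτ.2⟩
    rw [hmap (quantileFn μ τ), Measure.restrict_restrict' measurableSet_Ioo, hset]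
  rw [hτR, hint2, one_div]
end
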